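/- For a ∈ L(V) and a polynomial p = Σⱼ αⱼ tʲ ∈ F[t], define the linear map ṗ_a : L(V) → L(V) by ṗ_a(x) = Σ_{j≥1} αⱼ Σ_{i=0}^{j-1} a^{j-i-1} x a^i. Then for all x ∈ L(V): d_a(ṗ_a(x)) = d_{p(a)}(x), where d_c(x) = c x − x c. Consequently the range of the inner derivation d_{p(a)} is contained in the range of d_a. -/

import Mathlib

/-- The derivative `ṗ_a(x) = Σ_{j≥1} αⱼ Σ_{i=0}^{j-1} a^{j-i-1} x a^i` of the map
`a ↦ p(a)` at `a`, for `p = Σⱼ αⱼ tʲ`. -/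
noncomputable def polyDeriv {F V : Type*} [Field F] [AddCommGroup V] [Module F V]
    (a : Module.End F V) (p : Polynomial F) (x : Module.End F V) :
    Module.End F V :=
  p.sum fun j α => α •
    (Finset.range j).sum fun i => (a ^ (j - i - 1)) ∘ₗ x ∘ₗ (a ^ i)

lemma telescope_key {F V : Type*} [Field F] [AddCommGroup V] [Module F V]
    (a x : Module.End F V) (j : ℕ) :
    a * ((Finset.range j).sum fun i => a ^ (j - i - 1) * x * a ^ i) -
      ((Finset.range j).sum fun i => a ^ (j - i - 1) * x * a ^ i) * a =
      a ^ j * x - x * a ^ j := by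
  induction j with
  | zero => simp
  | succ n ih =>
    have hsplit : ((Finset.range (n+1)).sum fun i => a ^ (n + 1 - i - 1) * x * a ^ i) =
        a * ((Finset.range n).sum fun i => a ^ (n - i - 1) * x * a ^ i) + x * a ^ n := by
      rw [Finset.sum_range_succ, Finset.mul_sum]
      congr 1
      · apply Finset.sum_congr rfl
        intro i hi
        have hi' : i < n := Finset.mem_range.mp hi
        have : n + 1 - i - 1 = (n - i - 1) + 1 := by omega
        rw [this, pow_succ']
        simp [mul_assoc]
      · simp
    rw [hsplit]
    have : a * (a * ((Finset.range n).sum fun i => a ^ (n - i - 1) * x * a ^ i) + x * a ^ n) -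
        (a * ((Finset.range n).sum fun i => a ^ (n - i - 1) * x * a ^ i) + x * a ^ n) * a =
        a * (a * ((Finset.range n).sum fun i => a ^ (n - i - 1) * x * a ^ i) -
          ((Finset.range n).sum fun i => a ^ (n - i - 1) * x * a ^ i) * a) +
          (a * (x * a ^ n) - x * a ^ n * a) := by noncomm_ring
    rw [this, ih]
    have hc : a * a ^ n = a ^ n * a := by rw [← pow_succ', pow_succ]
    simp only [mul_sub, ← mul_assoc, hc, pow_succ]
    noncomm_ring

/-- `d_a(ṗ_a(x)) = d_{p(a)}(x)` for all `x`, and consequently the range of the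
inner derivation `d_{p(a)}` is contained in the range of `d_a`. -/
theorem derivation_range_of_polynomial
    {F V : Type*} [Field F] [AddCommGroup V] [Module F V]
    (a : Module.End F V) (p : Polynomial F) :
    (∀ x : Module.End F V,
      a ∘ₗ polyDeriv a p x - polyDeriv a p x ∘ₗ a =
        (Polynomial.aeval a p) ∘ₗ x - x ∘ₗ (Polynomial.aeval a p)) ∧
    Set.range (fun x : Module.End F V =>
        (Polynomial.aeval a p) ∘ₗ x - x ∘ₗ (Polynomial.aeval a p)) ⊆
      Set.range (fun x : Module.End F V => a ∘ₗ x - x ∘ₗ a) := by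
  have hmain : ∀ x : Module.End F V,
      a ∘ₗ polyDeriv a p x - polyDeriv a p x ∘ₗ a =
        (Polynomial.aeval a p) ∘ₗ x - x ∘ₗ (Polynomial.aeval a p) := by
    intro x
    have haeval : (Polynomial.aeval a) p = p.sum fun n c => c • a ^ n := by
      rw [Polynomial.aeval_def, Polynomial.eval₂_eq_sum, Polynomial.sum_def,
        Polynomial.sum_def]
      exact Finset.sum_congr rfl fun n _ => by simp [Algebra.smul_def]
    simp only [← Module.End.mul_eq_comp, polyDeriv, haeval, Polynomial.sum_def,
      Finset.mul_sum, Finset.sum_mul, ← Finset.sum_sub_distrib]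
    apply Finset.sum_congr rfl
    intro j _
    rw [mul_smul_comm, smul_mul_assoc, ← smul_sub, mul_smul_comm, smul_mul_assoc, ← smul_sub]
    congr 1
    simpa [mul_assoc] using telescope_key a x j
  refine ⟨hmain, ?_⟩
  rintro y ⟨x, rfl⟩
  exact ⟨polyDeriv a p x, hmain x⟩
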